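/- Let λ = (λ₁, λ₂, …, λ_N) be a partition with at most N parts, and let λ' denote its conjugate partition. Then the sets A = {λ'_i - i + 1/2 : 1 ≤ i ≤ N, λ'_i - i + 1/2 > 0} and B = {-λ_i + i - 1/2 : 1 ≤ i ≤ N, λ_i - i + 1/2 < 0} are disjoint. -/

import Mathlib

/-
If `λ'_i - i + 1/2 = -λ_j + j - 1/2`, then `λ'_i + λ_j + 1 = i + j`. Comparing `i` with `λ_j`
shows this is impossible: if `i ≤ λ_j` then rows `1, …, j` all reach column `i`, so `λ'_i ≥ j`
and the left side is too big; if `λ_j < i` then no row from `j` on reaches column `i`, so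
`λ'_i < j` and the left side is too small.
-/

/-- The conjugate partition: `conj N lam i = #{j : 1 ≤ j ≤ N, lam j ≥ i}`. -/
def conj (N : ℕ) (lam : ℕ → ℕ) (i : ℕ) : ℕ :=
  ((Finset.Icc 1 N).filter (fun j => i ≤ lam j)).card

section Conjugate

variable {N : ℕ} {lam : ℕ → ℕ}

theorem le_conj_of_le_lam (hmono : ∀ i j, 1 ≤ i → i ≤ j → j ≤ N → lam j ≤ lam i)
    {i j : ℕ} (hjN : j ≤ N) (h : i ≤ lam j) : j ≤ conj N lam i := by
  have hsub : Finset.Icc 1 j ⊆ (Finset.Icc 1 N).filter (fun k => i ≤ lam k) := by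
    intro k hk
    rw [Finset.mem_Icc] at hk
    rw [Finset.mem_filter, Finset.mem_Icc]
    exact ⟨⟨hk.1, hk.2.trans hjN⟩, h.trans (hmono k j hk.1 hk.2 hjN)⟩
  simpa [conj] using Finset.card_le_card hsub

theorem conj_lt_of_lam_lt (hmono : ∀ i j, 1 ≤ i → i ≤ j → j ≤ N → lam j ≤ lam i)
    {i j : ℕ} (hj : 1 ≤ j) (h : lam j < i) : conj N lam i < j := by
  have hsub : (Finset.Icc 1 N).filter (fun k => i ≤ lam k) ⊆ Finset.Ico 1 j := by
    intro k hk
    rw [Finset.mem_filter, Finset.mem_Icc] at hk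
    rw [Finset.mem_Ico]
    refine ⟨hk.1.1, lt_of_not_ge fun hjk => ?_⟩
    have := hmono j k hj hjk hk.1.2
    omega
  have := Finset.card_le_card hsub
  simp only [Nat.card_Ico] at this
  unfold conj
  omega

theorem conj_add_lam_add_one_ne (hmono : ∀ i j, 1 ≤ i → i ≤ j → j ≤ N → lam j ≤ lam i)
    (i : ℕ) {j : ℕ} (hj : 1 ≤ j) (hjN : j ≤ N) : conj N lam i + lam j + 1 ≠ i + j := by
  rcases le_or_gt i (lam j) with h | h
  · have := le_conj_of_le_lam hmono hjN h
    omega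
  · have := conj_lt_of_lam_lt hmono hj h
    omega

end Conjugate

theorem stmt0 (N : ℕ) (lam : ℕ → ℕ)
    (hmono : ∀ i j, 1 ≤ i → i ≤ j → j ≤ N → lam j ≤ lam i) :
    Disjoint
      {x : ℚ | ∃ i, 1 ≤ i ∧ i ≤ N ∧ x = (conj N lam i : ℚ) - i + 1/2 ∧ 0 < x}
      {x : ℚ | ∃ i, 1 ≤ i ∧ i ≤ N ∧ x = -(lam i : ℚ) + i - 1/2 ∧
        (lam i : ℚ) - i + 1/2 < 0} := by
  rw [Set.disjoint_left]
  rintro x ⟨i, -, -, rfl, -⟩ ⟨j, hj, hjN, hx, -⟩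
  apply conj_add_lam_add_one_ne hmono i hj hjN
  have : (conj N lam i : ℚ) + lam j + 1 = i + j := by linarith
  exact_mod_cast this
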